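/- Let J, R, E ∈ ℂ^{n×n} with J skew-Hermitian, R Hermitian positive semidefinite, and E Hermitian positive semidefinite. Then the unstructured distance to a common null space of J, R, and E, namely the infimum of √(‖Δ_J‖² + ‖Δ_R‖² + ‖Δ_E‖²) over all triples (Δ_J, Δ_R, Δ_E) ∈ (ℂ^{n×n})³ for which there exists a nonzero x ∈ ℂⁿ with (J + Δ_J)x = 0, (R + Δ_R)x = 0, and (E + Δ_E)x = 0, equals √(λ_min(−J² + R² + E²)). -/

import Mathlib

open Matrix
open scoped ComplexOrder

/-- The spectral norm (ℓ² operator norm) of a complex matrix. -/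
noncomputable def specNorm {k : Type*} [Fintype k] [DecidableEq k]
    (X : Matrix k k ℂ) : ℝ :=
  ‖Matrix.toEuclideanCLM (𝕜 := ℂ) X‖

/-- The smallest eigenvalue of a Hermitian matrix (junk value `0` otherwise). -/
noncomputable def lamMin {k : Type*} [Fintype k] [DecidableEq k]
    (H : Matrix k k ℂ) : ℝ :=
  if h : H.IsHermitian then ⨅ i, h.eigenvalues i else 0

/-!
Put `H = JᴴJ + RᴴR + EᴴE`, which is `-J² + R² + E²`; then `x*Hx = ‖Jx‖² + ‖Rx‖² + ‖Ex‖²`.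
If `(J + Δ_J)x = 0` then `‖Jx‖ = ‖Δ_J x‖ ≤ ‖Δ_J‖‖x‖`, and likewise for `R` and `E`, so
`λ_min(H)‖x‖² ≤ x*Hx ≤ (‖Δ_J‖² + ‖Δ_R‖² + ‖Δ_E‖²)‖x‖²`. Conversely, for a unit eigenvector `x`
of `λ_min(H)` the rank-one perturbations `Δ_A = -(Ax)x*` annihilate `x` and have norm exactly
`‖Ax‖`, so the lower bound is attained and the infimum is a minimum.
-/

open WithLp

section

variable {ι : Type*} [Fintype ι]

lemma star_dotProduct_self_eq_norm_sq (x : ι → ℂ) :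
    star x ⬝ᵥ x = (‖toLp 2 x‖ : ℂ) ^ 2 := by
  rw [dotProduct_comm, ← EuclideanSpace.inner_toLp_toLp]
  exact inner_self_eq_norm_sq_to_K _

lemma re_star_dotProduct_conjTranspose_mul_self_mulVec (A : Matrix ι ι ℂ) (x : ι → ℂ) :
    (star x ⬝ᵥ (Aᴴ * A) *ᵥ x).re = ‖toLp 2 (A *ᵥ x)‖ ^ 2 := by
  rw [← mulVec_mulVec, dotProduct_mulVec, ← star_mulVec, star_dotProduct_self_eq_norm_sq]
  norm_cast

lemma add_neg_vecMulVec_mulVec_self {x : ι → ℂ} (hx : star x ⬝ᵥ x = 1) (A : Matrix ι ι ℂ) :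
    (A + -vecMulVec (A *ᵥ x) (star x)) *ᵥ x = 0 := by
  rw [add_mulVec, neg_mulVec, vecMulVec_mulVec, hx, MulOpposite.op_one, one_smul, add_neg_cancel]

lemma isHermitian_gram (A B C : Matrix ι ι ℂ) : (Aᴴ * A + Bᴴ * B + Cᴴ * C).IsHermitian :=
  ((isHermitian_conjTranspose_mul_self A).add (isHermitian_conjTranspose_mul_self B)).add
    (isHermitian_conjTranspose_mul_self C)

lemma re_star_dotProduct_gram_mulVec (A B C : Matrix ι ι ℂ) (x : ι → ℂ) :
    (star x ⬝ᵥ (Aᴴ * A + Bᴴ * B + Cᴴ * C) *ᵥ x).re =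
      ‖toLp 2 (A *ᵥ x)‖ ^ 2 + ‖toLp 2 (B *ᵥ x)‖ ^ 2 + ‖toLp 2 (C *ᵥ x)‖ ^ 2 := by
  simp only [add_mulVec, dotProduct_add, Complex.add_re,
    re_star_dotProduct_conjTranspose_mul_self_mulVec]

end

section

variable {ι : Type*} [Fintype ι] [DecidableEq ι]

lemma specNorm_neg (A : Matrix ι ι ℂ) : specNorm (-A) = specNorm A := by
  rw [specNorm, map_neg, norm_neg, specNorm]

lemma norm_toLp_mulVec_le_specNorm_mul (A : Matrix ι ι ℂ) (x : ι → ℂ) :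
    ‖toLp 2 (A *ᵥ x)‖ ≤ specNorm A * ‖toLp 2 x‖ :=
  (toEuclideanCLM (𝕜 := ℂ) A).le_opNorm (toLp 2 x)

lemma norm_toLp_mulVec_le_of_add_mulVec_eq_zero {A D : Matrix ι ι ℂ} {x : ι → ℂ}
    (h : (A + D) *ᵥ x = 0) : ‖toLp 2 (A *ᵥ x)‖ ≤ specNorm D * ‖toLp 2 x‖ := by
  rw [add_mulVec, add_eq_zero_iff_eq_neg, ← neg_mulVec] at h
  rw [h, ← specNorm_neg D]
  exact norm_toLp_mulVec_le_specNorm_mul (-D) x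

lemma toEuclideanCLM_vecMulVec (u x : ι → ℂ) :
    toEuclideanCLM (𝕜 := ℂ) (vecMulVec u (star x)) =
      InnerProductSpace.rankOne ℂ (toLp 2 u) (toLp 2 x) := by
  ext1 ⟨y⟩
  rw [toEuclideanCLM_toLp, vecMulVec_mulVec, op_smul_eq_smul, InnerProductSpace.rankOne_apply,
    EuclideanSpace.inner_toLp_toLp, dotProduct_comm, toLp_smul]

lemma specNorm_vecMulVec (u x : ι → ℂ) :
    specNorm (vecMulVec u (star x)) = ‖toLp 2 u‖ * ‖toLp 2 x‖ := by
  rw [specNorm, toEuclideanCLM_vecMulVec, InnerProductSpace.norm_rankOne]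

lemma lamMin_le_eigenvalues {H : Matrix ι ι ℂ} (hH : H.IsHermitian) (i : ι) :
    lamMin H ≤ hH.eigenvalues i := by
  rw [lamMin, dif_pos hH]
  exact ciInf_le (Finite.bddBelow_range _) i

lemma exists_eigenvalues_eq_lamMin [Nonempty ι] {H : Matrix ι ι ℂ} (hH : H.IsHermitian) :
    ∃ i, hH.eigenvalues i = lamMin H := by
  rw [lamMin, dif_pos hH]
  exact exists_eq_ciInf_of_finite

lemma lamMin_of_isEmpty [IsEmpty ι] (H : Matrix ι ι ℂ) : lamMin H = 0 := by
  unfold lamMin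
  split_ifs
  · exact Real.iInf_of_isEmpty _
  · rfl

lemma Matrix.IsHermitian.posSemidef_sub_lamMin_smul_one {H : Matrix ι ι ℂ}
    (hH : H.IsHermitian) : (H - (lamMin H : ℂ) • 1).PosSemidef := by
  refine posSemidef_iff_isHermitian_and_spectrum_nonneg.2
    ⟨hH.sub (isHermitian_one.smul (Complex.conj_ofReal _)), ?_⟩
  rw [← Algebra.algebraMap_eq_smul_one, ← spectrum.sub_singleton_eq, hH.spectrum_eq_image_range]
  rintro _ ⟨_, ⟨_, ⟨i, rfl⟩, rfl⟩, _, rfl, rfl⟩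
  simpa [← Complex.ofReal_sub] using lamMin_le_eigenvalues hH i

lemma Matrix.IsHermitian.lamMin_mul_norm_sq_le {H : Matrix ι ι ℂ} (hH : H.IsHermitian)
    (x : ι → ℂ) : lamMin H * ‖toLp 2 x‖ ^ 2 ≤ (star x ⬝ᵥ H *ᵥ x).re := by
  have := hH.posSemidef_sub_lamMin_smul_one.re_dotProduct_nonneg x
  rw [sub_mulVec, smul_mulVec, one_mulVec, dotProduct_sub, dotProduct_smul,
    star_dotProduct_self_eq_norm_sq, ← Complex.ofReal_pow, smul_eq_mul, ← Complex.ofReal_mul,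
    map_sub, RCLike.re_to_complex, RCLike.re_to_complex, Complex.ofReal_re] at this
  linarith

def commonNullPerturbationSizes (A B C : Matrix ι ι ℂ) : Set ℝ :=
  {r | ∃ (DA DB DC : Matrix ι ι ℂ) (x : ι → ℂ), x ≠ 0 ∧ (A + DA) *ᵥ x = 0 ∧
    (B + DB) *ᵥ x = 0 ∧ (C + DC) *ᵥ x = 0 ∧
    r = √(specNorm DA ^ 2 + specNorm DB ^ 2 + specNorm DC ^ 2)}

variable (A B C : Matrix ι ι ℂ)

lemma sqrt_lamMin_gram_le_of_mem {r : ℝ} (hr : r ∈ commonNullPerturbationSizes A B C) :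
    √(lamMin (Aᴴ * A + Bᴴ * B + Cᴴ * C)) ≤ r := by
  obtain ⟨DA, DB, DC, x, hx0, hA, hB, hC, rfl⟩ := hr
  have hxpos : 0 < ‖toLp 2 x‖ ^ 2 := by
    have : toLp 2 x ≠ 0 := fun h => hx0 (congrArg ofLp h)
    positivity
  refine Real.sqrt_le_sqrt (le_of_mul_le_mul_right ?_ hxpos)
  calc lamMin (Aᴴ * A + Bᴴ * B + Cᴴ * C) * ‖toLp 2 x‖ ^ 2
      ≤ (star x ⬝ᵥ (Aᴴ * A + Bᴴ * B + Cᴴ * C) *ᵥ x).re :=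
        (isHermitian_gram A B C).lamMin_mul_norm_sq_le x
    _ = ‖toLp 2 (A *ᵥ x)‖ ^ 2 + ‖toLp 2 (B *ᵥ x)‖ ^ 2 + ‖toLp 2 (C *ᵥ x)‖ ^ 2 :=
        re_star_dotProduct_gram_mulVec A B C x
    _ ≤ (specNorm DA * ‖toLp 2 x‖) ^ 2 + (specNorm DB * ‖toLp 2 x‖) ^ 2 +
        (specNorm DC * ‖toLp 2 x‖) ^ 2 := by
        gcongr <;> exact norm_toLp_mulVec_le_of_add_mulVec_eq_zero ‹_›
    _ = (specNorm DA ^ 2 + specNorm DB ^ 2 + specNorm DC ^ 2) * ‖toLp 2 x‖ ^ 2 := by ring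

lemma sqrt_lamMin_gram_mem [Nonempty ι] :
    √(lamMin (Aᴴ * A + Bᴴ * B + Cᴴ * C)) ∈ commonNullPerturbationSizes A B C := by
  set hH := isHermitian_gram A B C
  obtain ⟨i, hi⟩ := exists_eigenvalues_eq_lamMin hH
  set x : ι → ℂ := ⇑(hH.eigenvectorBasis i)
  have hx : ‖toLp 2 x‖ = 1 := hH.eigenvectorBasis.orthonormal.1 i
  have hxx : star x ⬝ᵥ x = 1 := by simp [star_dotProduct_self_eq_norm_sq, hx]
  have hre : (star x ⬝ᵥ (Aᴴ * A + Bᴴ * B + Cᴴ * C) *ᵥ x).re =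
      lamMin (Aᴴ * A + Bᴴ * B + Cᴴ * C) := by
    rw [hH.mulVec_eigenvectorBasis i, dotProduct_smul, hxx, hi]
    simp
  refine ⟨_, _, _, x, fun h => by simp [h] at hxx, add_neg_vecMulVec_mulVec_self hxx A,
    add_neg_vecMulVec_mulVec_self hxx B, add_neg_vecMulVec_mulVec_self hxx C, ?_⟩
  simp only [specNorm_neg, specNorm_vecMulVec, hx, mul_one]
  rw [← re_star_dotProduct_gram_mulVec, hre]

lemma isLeast_commonNullPerturbationSizes [Nonempty ι] :
    IsLeast (commonNullPerturbationSizes A B C) √(lamMin (Aᴴ * A + Bᴴ * B + Cᴴ * C)) :=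
  ⟨sqrt_lamMin_gram_mem A B C, fun _ => sqrt_lamMin_gram_le_of_mem A B C⟩

lemma commonNullPerturbationSizes_of_isEmpty [IsEmpty ι] :
    commonNullPerturbationSizes A B C = ∅ :=
  Set.eq_empty_of_forall_notMem fun _ ⟨_, _, _, x, hx, _⟩ => hx (Subsingleton.elim x 0)

theorem sInf_commonNullPerturbationSizes :
    sInf (commonNullPerturbationSizes A B C) = √(lamMin (Aᴴ * A + Bᴴ * B + Cᴴ * C)) := by
  cases isEmpty_or_nonempty ι
  · -- in dimension `0` both sides are junk values: `sInf ∅ = 0` and an empty `⨅` is `0`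
    rw [commonNullPerturbationSizes_of_isEmpty, Real.sInf_empty, lamMin_of_isEmpty,
      Real.sqrt_zero]
  · exact (isLeast_commonNullPerturbationSizes A B C).csInf_eq

end

/-- Unstructured distance to a common null space of `J`, `R`, `E`:
`δ₀(J,R,E) = √(λ_min(−J² + R² + E²))`. -/
theorem unstructured_distance_common_null_JRE
    {n : ℕ} (J R E : Matrix (Fin n) (Fin n) ℂ)
    (hJ : Jᴴ = -J) (hR : R.PosSemidef) (hE : E.PosSemidef) :
    sInf {r : ℝ | ∃ (DJ DR DE : Matrix (Fin n) (Fin n) ℂ) (x : Fin n → ℂ),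
        x ≠ 0 ∧ (J + DJ).mulVec x = 0 ∧ (R + DR).mulVec x = 0 ∧
        (E + DE).mulVec x = 0 ∧
        r = Real.sqrt (specNorm DJ ^ 2 + specNorm DR ^ 2 + specNorm DE ^ 2)} =
      Real.sqrt (lamMin (-(J * J) + R * R + E * E)) := by
  have hgram : -(J * J) + R * R + E * E = Jᴴ * J + Rᴴ * R + Eᴴ * E := by
    rw [hJ, hR.isHermitian.eq, hE.isHermitian.eq, neg_mul]
  rw [hgram]
  exact sInf_commonNullPerturbationSizes J R E
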